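/- Let a, b, τ > 0, s ∈ ℝ, σ > 0, and y ∈ ℝ. Define the joint density on ℝ × (0,1): f(β, κ) = N(y; β, σ²) N(β; 0, σ²(1/κ − 1)) π_{a,b,τ,s}(κ). Then the posterior mean of β satisfies [∬ β f(β,κ) dβ dκ] / [∬ f(β,κ) dβ dκ] = (1 − E(κ | y)) · y, where E(κ | y) = [∬ κ f(β,κ) dβ dκ] / [∬ f(β,κ) dβ dκ]. -/

import Mathlib

open MeasureTheory Set

/-- The unnormalized hypergeometric-beta kernel
`κ^{a−1} (1−κ)^{b−1} {1/τ² + (1 − 1/τ²)κ}^{−1} e^{−sκ}`. -/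
noncomputable def hbKer (a b τ s κ : ℝ) : ℝ :=
  κ ^ (a - 1) * (1 - κ) ^ (b - 1) * (1 / τ ^ 2 + (1 - 1 / τ ^ 2) * κ)⁻¹ *
    Real.exp (-(s * κ))

/-- The normalizing constant `C(a,b,τ,s)`. -/
noncomputable def hbC (a b τ s : ℝ) : ℝ :=
  ∫ κ in Set.Ioo (0 : ℝ) 1, hbKer a b τ s κ

/-- The hypergeometric-beta density `π_{a,b,τ,s}` on `(0,1)`. -/
noncomputable def hbPdf (a b τ s κ : ℝ) : ℝ :=
  (hbC a b τ s)⁻¹ * hbKer a b τ s κ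

/-- The normal density with mean `μ` and variance `v`. -/
noncomputable def normPdf (y μ v : ℝ) : ℝ :=
  (2 * Real.pi * v) ^ (-(1 : ℝ) / 2) * Real.exp (-((y - μ) ^ 2) / (2 * v))

/-- The joint density `f(β, κ) = N(y; β, σ²) N(β; 0, σ²(1/κ − 1)) π_{a,b,τ,s}(κ)`. -/
noncomputable def jointF (a b τ s σ y β κ : ℝ) : ℝ :=
  normPdf y β (σ ^ 2) * normPdf β 0 (σ ^ 2 * (1 / κ - 1)) * hbPdf a b τ s κ

/-! Given κ, normal–normal conjugacy factors
`N(y; β, σ²) N(β; 0, σ²(1/κ − 1)) = N(y; 0, σ²/κ) N(β; (1 − κ) y, σ²(1 − κ))`,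
so the β-integrals of `f`, `β f` and `κ f` are `m(κ)`, `(1 − κ) y m(κ)` and `κ m(κ)` with
`m(κ) = N(y; 0, σ²/κ) π(κ)`. The claim is then linearity of the κ-integral: `m` is dominated by a
multiple of `π`, hence integrable on `(0, 1)`, and its integral is positive. -/

open ProbabilityTheory

lemma setIntegral_Ioo_pos {f : ℝ → ℝ} {a b : ℝ} (hab : a < b) (hf : IntegrableOn f (Ioo a b))
    (hpos : ∀ x ∈ Ioo a b, 0 < f x) : 0 < ∫ x in Ioo a b, f x := by
  rw [← integral_Ioc_eq_integral_Ioo, ← intervalIntegral.integral_of_le hab.le]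
  exact intervalIntegral.intervalIntegral_pos_of_pos_on
    ((intervalIntegrable_iff_integrableOn_Ioo_of_le hab.le).mpr hf) hpos hab

lemma integral_one_sub_mul_mul_div_integral {α : Type*} [MeasurableSpace α] {μ : Measure α}
    {f k : α → ℝ} (c : ℝ) (hf : Integrable f μ) (hkf : Integrable (fun x => k x * f x) μ)
    (hf₀ : ∫ x, f x ∂μ ≠ 0) :
    (∫ x, (1 - k x) * c * f x ∂μ) / ∫ x, f x ∂μ = (1 - (∫ x, k x * f x ∂μ) / ∫ x, f x ∂μ) * c := by
  have hsplit : ∫ x, (1 - k x) * c * f x ∂μ = c * ∫ x, f x ∂μ - c * ∫ x, k x * f x ∂μ := by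
    rw [← integral_const_mul, ← integral_const_mul,
      ← integral_sub (hf.const_mul c) (hkf.const_mul c)]
    congr 1 with x
    ring
  rw [hsplit]
  field_simp

section Gaussian

variable {x m v : ℝ}

lemma normPdf_eq_gaussianPDFReal (hv : 0 ≤ v) : normPdf x m v = gaussianPDFReal m v.toNNReal x := by
  rw [normPdf, gaussianPDFReal, Real.coe_toNNReal _ hv, neg_div, Real.rpow_neg (by positivity),
    ← Real.sqrt_eq_rpow, neg_div]

lemma normPdf_pos (hv : 0 < v) : 0 < normPdf x m v := by
  rw [normPdf_eq_gaussianPDFReal hv.le]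
  exact gaussianPDFReal_pos _ _ _ (by simpa using hv)

lemma integral_normPdf (hv : 0 < v) : ∫ x, normPdf x m v = 1 := by
  simp_rw [normPdf_eq_gaussianPDFReal hv.le]
  exact integral_gaussianPDFReal_eq_one m (by simpa using hv)

lemma integral_mul_normPdf (hv : 0 < v) : ∫ x, x * normPdf x m v = m := by
  simp_rw [normPdf_eq_gaussianPDFReal hv.le, mul_comm _ (gaussianPDFReal _ _ _), ← smul_eq_mul]
  rw [← integral_gaussianReal_eq_integral_smul (by simpa using hv), integral_id_gaussianReal]

lemma normPdf_le_of_le {w : ℝ} (hw : 0 < w) (hwv : w ≤ v) :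
    normPdf x m v ≤ (2 * Real.pi * w) ^ (-(1 : ℝ) / 2) := by
  have hv : 0 < v := hw.trans_le hwv
  have hexp : Real.exp (-((x - m) ^ 2) / (2 * v)) ≤ 1 :=
    Real.exp_le_one_iff.mpr (div_nonpos_of_nonpos_of_nonneg (by nlinarith) (by linarith))
  calc normPdf x m v ≤ (2 * Real.pi * v) ^ (-(1 : ℝ) / 2) * 1 := by
        unfold normPdf
        gcongr
    _ ≤ (2 * Real.pi * w) ^ (-(1 : ℝ) / 2) := by
        rw [mul_one]
        exact Real.rpow_le_rpow_of_nonpos (by positivity) (by gcongr) (by norm_num)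

lemma normPdf_mul_normPdf (y β : ℝ) {v₁ v₂ : ℝ} (h₁ : 0 < v₁) (h₂ : 0 < v₂) :
    normPdf y β v₁ * normPdf β 0 v₂ =
      normPdf y 0 (v₁ + v₂) * normPdf β (y * v₂ / (v₁ + v₂)) (v₁ * v₂ / (v₁ + v₂)) := by
  unfold normPdf
  rw [mul_mul_mul_comm, mul_mul_mul_comm ((2 * Real.pi * (v₁ + v₂)) ^ (-(1 : ℝ) / 2)),
    ← Real.mul_rpow (by positivity) (by positivity),
    ← Real.mul_rpow (by positivity) (by positivity),
    ← Real.exp_add, ← Real.exp_add]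
  congr 2
  · field_simp
  · field_simp
    ring

end Gaussian

section HypergeometricBeta

variable {a b τ s κ : ℝ}

lemma integrableOn_rpow_mul_one_sub_rpow (ha : 0 < a) (hb : 0 < b) :
    IntegrableOn (fun x : ℝ => x ^ (a - 1) * (1 - x) ^ (b - 1)) (Ioo 0 1) := by
  have hβ := (intervalIntegrable_iff_integrableOn_Ioo_of_le zero_le_one).mp
    (Complex.betaIntegral_convergent (u := a) (v := b) (by simpa) (by simpa))
  refine IntegrableOn.congr_fun hβ.norm (fun x hx => ?_) measurableSet_Ioo
  have h1x : (1 : ℂ) - x = ((1 - x : ℝ) : ℂ) := by push_cast; ring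
  rw [norm_mul, h1x, Complex.norm_cpow_eq_rpow_re_of_pos hx.1,
    Complex.norm_cpow_eq_rpow_re_of_pos (sub_pos.mpr hx.2)]
  simp

lemma hbKer_denom_pos (hτ : τ ≠ 0) (hκ : κ ∈ Icc (0 : ℝ) 1) :
    0 < 1 / τ ^ 2 + (1 - 1 / τ ^ 2) * κ := by
  have hτ2 : 0 < 1 / τ ^ 2 := by positivity
  rcases hκ.1.eq_or_lt with rfl | hκ₀
  · simpa using hτ2
  · nlinarith [mul_nonneg (sub_nonneg.mpr hκ.2) hτ2.le]

lemma hbKer_pos (hτ : τ ≠ 0) (hκ : κ ∈ Ioo (0 : ℝ) 1) : 0 < hbKer a b τ s κ := by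
  have := hbKer_denom_pos hτ (Ioo_subset_Icc_self hκ)
  have := sub_pos.mpr hκ.2
  have := hκ.1
  unfold hbKer
  positivity

lemma integrableOn_hbKer (ha : 0 < a) (hb : 0 < b) (hτ : τ ≠ 0) :
    IntegrableOn (hbKer a b τ s) (Ioo 0 1) := by
  have hcont : ContinuousOn (fun κ : ℝ => (1 / τ ^ 2 + (1 - 1 / τ ^ 2) * κ)⁻¹ * Real.exp (-(s * κ)))
      (Icc 0 1) :=
    ((continuousOn_const.add (continuousOn_const.mul continuousOn_id)).inv₀
      fun κ hκ => (hbKer_denom_pos hτ hκ).ne').mul (by fun_prop)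
  refine ((integrableOn_rpow_mul_one_sub_rpow ha hb).mul_continuousOn_of_subset hcont
    measurableSet_Ioo isCompact_Icc Ioo_subset_Icc_self).congr_fun (fun κ _ => ?_) measurableSet_Ioo
  simp only [hbKer, mul_assoc]

lemma hbC_pos (ha : 0 < a) (hb : 0 < b) (hτ : τ ≠ 0) : 0 < hbC a b τ s :=
  setIntegral_Ioo_pos one_pos (integrableOn_hbKer ha hb hτ) fun _ hκ => hbKer_pos hτ hκ

lemma hbPdf_pos (ha : 0 < a) (hb : 0 < b) (hτ : τ ≠ 0) (hκ : κ ∈ Ioo (0 : ℝ) 1) :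
    0 < hbPdf a b τ s κ :=
  mul_pos (inv_pos.mpr (hbC_pos ha hb hτ)) (hbKer_pos hτ hκ)

lemma integrableOn_hbPdf (ha : 0 < a) (hb : 0 < b) (hτ : τ ≠ 0) :
    IntegrableOn (hbPdf a b τ s) (Ioo 0 1) :=
  (integrableOn_hbKer ha hb hτ).const_mul _

end HypergeometricBeta

noncomputable def marginalF (a b τ s σ y κ : ℝ) : ℝ :=
  normPdf y 0 (σ ^ 2 / κ) * hbPdf a b τ s κ

section Marginal

variable {a b τ s σ y κ : ℝ}

lemma jointF_eq_marginalF_mul_normPdf (hσ : σ ≠ 0) (hκ : κ ∈ Ioo (0 : ℝ) 1) (β : ℝ) :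
    jointF a b τ s σ y β κ =
      marginalF a b τ s σ y κ * normPdf β ((1 - κ) * y) (σ ^ 2 * (1 - κ)) := by
  have hκ₀ : κ ≠ 0 := hκ.1.ne'
  have hprior : 0 < σ ^ 2 * (1 / κ - 1) :=
    mul_pos (by positivity) (sub_pos.mpr ((one_lt_div hκ.1).mpr hκ.2))
  have hsum : σ ^ 2 + σ ^ 2 * (1 / κ - 1) = σ ^ 2 / κ := by field_simp; ring
  rw [jointF, normPdf_mul_normPdf y β (by positivity) hprior, hsum, marginalF]
  have hmean : y * (σ ^ 2 * (1 / κ - 1)) / (σ ^ 2 / κ) = (1 - κ) * y := by field_simp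
  have hvar : σ ^ 2 * (σ ^ 2 * (1 / κ - 1)) / (σ ^ 2 / κ) = σ ^ 2 * (1 - κ) := by field_simp
  rw [hmean, hvar]
  ring

lemma integral_jointF (hσ : σ ≠ 0) (hκ : κ ∈ Ioo (0 : ℝ) 1) :
    ∫ β, jointF a b τ s σ y β κ = marginalF a b τ s σ y κ := by
  simp_rw [jointF_eq_marginalF_mul_normPdf hσ hκ]
  rw [integral_const_mul, integral_normPdf (by have := sub_pos.mpr hκ.2; positivity), mul_one]

lemma integral_mul_jointF (hσ : σ ≠ 0) (hκ : κ ∈ Ioo (0 : ℝ) 1) :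
    ∫ β, β * jointF a b τ s σ y β κ = (1 - κ) * y * marginalF a b τ s σ y κ := by
  simp_rw [jointF_eq_marginalF_mul_normPdf hσ hκ, mul_left_comm _ (marginalF a b τ s σ y κ)]
  rw [integral_const_mul, integral_mul_normPdf (by have := sub_pos.mpr hκ.2; positivity), mul_comm]

lemma marginalF_pos (ha : 0 < a) (hb : 0 < b) (hτ : τ ≠ 0) (hσ : σ ≠ 0)
    (hκ : κ ∈ Ioo (0 : ℝ) 1) : 0 < marginalF a b τ s σ y κ :=
  mul_pos (normPdf_pos (by have := hκ.1; positivity)) (hbPdf_pos ha hb hτ hκ)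

lemma integrableOn_marginalF (ha : 0 < a) (hb : 0 < b) (hτ : τ ≠ 0) (hσ : σ ≠ 0) :
    IntegrableOn (marginalF a b τ s σ y) (Ioo 0 1) := by
  have hmeas : Measurable fun κ : ℝ => normPdf y 0 (σ ^ 2 / κ) := by
    unfold normPdf
    fun_prop
  have hπ := integrableOn_hbPdf (s := s) ha hb hτ
  refine Integrable.mono' (hπ.const_mul ((2 * Real.pi * σ ^ 2) ^ (-(1 : ℝ) / 2)))
    (hmeas.aestronglyMeasurable.mul hπ.aestronglyMeasurable) ?_
  filter_upwards [ae_restrict_mem measurableSet_Ioo] with κ hκ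
  rw [Real.norm_of_nonneg (marginalF_pos ha hb hτ hσ hκ).le, marginalF]
  gcongr
  · exact (hbPdf_pos ha hb hτ hκ).le
  · exact normPdf_le_of_le (by positivity) (le_div_self (by positivity) hκ.1 hκ.2.le)

end Marginal

theorem hb_posterior_mean_is_shrinkage_rule (a b τ s σ y : ℝ) (ha : 0 < a) (hb : 0 < b)
    (hτ : 0 < τ) (hσ : 0 < σ) :
    (∫ κ in Set.Ioo (0 : ℝ) 1, ∫ β : ℝ, β * jointF a b τ s σ y β κ) /
        (∫ κ in Set.Ioo (0 : ℝ) 1, ∫ β : ℝ, jointF a b τ s σ y β κ) =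
      (1 - (∫ κ in Set.Ioo (0 : ℝ) 1, ∫ β : ℝ, κ * jointF a b τ s σ y β κ) /
            (∫ κ in Set.Ioo (0 : ℝ) 1, ∫ β : ℝ, jointF a b τ s σ y β κ)) * y := by
  have hG := integrableOn_marginalF (s := s) (y := y) ha hb hτ.ne' hσ.ne'
  have hG₀ : 0 < ∫ κ in Ioo (0 : ℝ) 1, marginalF a b τ s σ y κ :=
    setIntegral_Ioo_pos one_pos hG fun _ hκ => marginalF_pos ha hb hτ.ne' hσ.ne' hκ
  have hκG : IntegrableOn (fun κ => κ * marginalF a b τ s σ y κ) (Ioo 0 1) :=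
    hG.continuousOn_mul_of_subset continuousOn_id isCompact_Icc measurableSet_Ioo
      Ioo_subset_Icc_self
  rw [setIntegral_congr_fun measurableSet_Ioo fun κ hκ => integral_mul_jointF hσ.ne' hκ,
    setIntegral_congr_fun measurableSet_Ioo fun κ hκ => integral_jointF hσ.ne' hκ,
    setIntegral_congr_fun measurableSet_Ioo fun κ hκ =>
      (integral_const_mul κ _).trans (congrArg _ (integral_jointF hσ.ne' hκ))]
  exact integral_one_sub_mul_mul_div_integral y hG hκG hG₀.ne'
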